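/- Let a_i=λ_{2i−1} for i≥1 and A_k=a_1⋯a_{2^k} (so a_1=1, A_1=1(−1), and A_{k+1}=A_k 𝐴̄_k). Then for every k≥1 and every 0<i<2^{k+1} with i≠2^k, the sequence D_{k,k}^i=(σ^i((A_k 𝐴̄_k)^∞),(A_k 𝐴̄_k)^∞) contains an occurrence of (−1,−1) or of (1,1). -/
import Mathlib


open scoped Pointwise ENNReal
open Filter

noncomputable section

/-- The digit set Ω₁ = {(0,0),(0,1),(1,0)} ⊆ ℝ². -/
def Omega1 : Set (ℝ × ℝ) := {((0:ℝ), (0:ℝ)), (0, 1), (1, 0)}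

/-- The digit set Ω₂ = Ω₁ − Ω₁ ⊆ ℝ². -/
def Omega2 : Set (ℝ × ℝ) :=
  {((0:ℝ), (0:ℝ)), (0, 1), (1, 0), (-1, 0), (-1, 1), (0, -1), (1, -1)}

/-- The Sierpinski gasket in base `q`. -/
def gasket (q : ℝ) : Set (ℝ × ℝ) :=
  {x | ∃ c : ℕ → ℝ × ℝ, (∀ i, c i ∈ Omega1) ∧ x = ∑' i, (q ^ (i + 1))⁻¹ • c i}

/-- `U_q`: points of `[-1/(q-1), 1/(q-1)]` having a unique `q`-expansion over `{-1,0,1}`. -/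
def uniqSet (q : ℝ) : Set ℝ :=
  {s | s ∈ Set.Icc (-(1 / (q - 1))) (1 / (q - 1)) ∧
    ∃! t : ℕ → ℝ, (∀ i, t i ∈ ({-1, 0, 1} : Set ℝ)) ∧ s = ∑' i, t i / q ^ (i + 1)}

/-- The set `T`. -/
def Tset (q : ℝ) : Set (ℝ × ℝ) :=
  {t | t ∈ gasket q - gasket q ∧ t.1 ∈ uniqSet q ∧ t.2 ∈ uniqSet q}

/-- The set `D_q` of Hausdorff dimensions of intersections. -/
def Dset (q : ℝ) : Set ℝ≥0∞ :=
  {d | ∃ t ∈ Tset q, d = dimH (gasket q ∩ ((· + t) '' gasket q))}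

/-- The words `w_n` over `{0,1,2}`: `klWord 0 = w₁ = 2`,
`w_{n+1} = (w_n ⟨reflection of w_n⟩)⁺`. -/
def klWord : ℕ → List ℕ
  | 0 => [2]
  | n + 1 =>
    let w := klWord n ++ (klWord n).map (fun x => 2 - x)
    w.dropLast ++ [w.getLast?.getD 0 + 1]

/-- `isKLBase n p`: `p ∈ (2,3)` and `1` has (greedy) expansion `w_n 0^∞` in base `p`
w.r.t. `{0,1,2}`, i.e. `p = q_n`. -/
def isKLBase (n : ℕ) (p : ℝ) : Prop :=
  p ∈ Set.Ioo (2 : ℝ) 3 ∧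
    (1 : ℝ) = ∑ i ∈ Finset.range (klWord (n - 1)).length,
      ((klWord (n - 1)).getD i 0 : ℝ) / p ^ (i + 1)

/-- `1` has a unique expansion in base `p` w.r.t. the digit set `{0,1,2}`. -/
def uniqueOneExp (p : ℝ) : Prop :=
  ∃! c : ℕ → ℕ, (∀ i, c i ≤ 2) ∧ (1 : ℝ) = ∑' i, (c i : ℝ) / p ^ (i + 1)

/-- The Thue–Morse sequence. -/
def tm : ℕ → ℕ
  | 0 => 0
  | n + 1 => if (n + 1) % 2 = 0 then tm ((n + 1) / 2) else 1 - tm ((n + 1) / 2)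
decreasing_by all_goals omega

/-- `λ_i = τ_i − τ_{i−1}` (for `i ≥ 1`). -/
def lam (i : ℕ) : ℤ := (tm i : ℤ) - (tm (i - 1) : ℤ)

/-- The word `ε_n = λ₁ ⋯ λ_{2^n}`. -/
def eps (n : ℕ) : List ℤ := (List.range (2 ^ n)).map fun i => lam (i + 1)

/-- Reflection of a word over `{-1,0,1}`: each digit `x` is replaced by `-x`. -/
def reflect (w : List ℤ) : List ℤ := w.map fun x => -x

/-- `w⁺`: the last digit is increased by `1`. -/
def plusOne (w : List ℤ) : List ℤ := w.dropLast ++ [w.getLast?.getD 0 + 1]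

/-- `w⁻`: the last digit is decreased by `1`. -/
def minusOne (w : List ℤ) : List ℤ := w.dropLast ++ [w.getLast?.getD 0 - 1]

/-- The periodic sequence `w^∞` (the `(j+1)`-st term is `per w j`). -/
def per (w : List ℤ) : ℕ → ℤ := fun j => w.getD (j % w.length) 0

/-- `EndsWith x s`: the sequence `x` ends with (has tail) the sequence `s`. -/
def EndsWith {α : Type*} (x s : ℕ → α) : Prop := ∃ k, ∀ j, x (j + k) = s j

/-- The digit set Ω₂ as a subset of ℤ × ℤ. -/
def Omega2Z : Set (ℤ × ℤ) :=
  {((0:ℤ), (0:ℤ)), (0, 1), (1, 0), (-1, 0), (-1, 1), (0, -1), (1, -1)}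

/-- `E_{n,m}^i = (σ^i((ε_n ε̄_n)^∞), (ε_m ε̄_m)^∞)` (the `(j+1)`-st term is `Eseq n m i j`). -/
def Eseq (n m i : ℕ) : ℕ → ℤ × ℤ := fun j =>
  (per (eps n ++ reflect (eps n)) (j + i), per (eps m ++ reflect (eps m)) j)


/-- `A_k = a₁ ⋯ a_{2^k}` where `a_i = λ_{2i−1}`. -/
def Aword (k : ℕ) : List ℤ := (List.range (2 ^ k)).map fun i => lam (2 * i + 1)

/-- `D_{k,k}^i = (σ^i((A_k Ā_k)^∞), (A_k Ā_k)^∞)`. -/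
def Dseq (k i : ℕ) : ℕ → ℤ × ℤ := fun j =>
  (per (Aword k ++ reflect (Aword k)) (j + i), per (Aword k ++ reflect (Aword k)) j)

/-- `U_q'`: the set of sequences over `{-1,0,1}` which are the unique `q`-expansion
of the number they represent. -/
def uniqSeqSet (q : ℝ) : Set (ℕ → ℤ) :=
  {t | (∀ i, t i ∈ ({-1, 0, 1} : Set ℤ)) ∧
    ∀ s : ℕ → ℤ, (∀ i, s i ∈ ({-1, 0, 1} : Set ℤ)) →
      (∑' i, (s i : ℝ) / q ^ (i + 1)) = (∑' i, (t i : ℝ) / q ^ (i + 1)) → s = t}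

/-- `ε_{n-1} ε̄_{n-1}`, with the convention `ε_{-1} ε̄_{-1} := 00`. -/
def epsPair : ℕ → List ℤ
  | 0 => [0, 0]
  | n + 1 => eps n ++ reflect (eps n)

/-- The finite prefix
`(ε_0 ε̄_0)^{j_0} (ε_0 ε̄_1)^{l_0} ⋯ (ε_{M-1} ε̄_{M-1})^{j_{M-1}} (ε_{M-1} ε̄_M)^{l_{M-1}}`. -/
def blockJL (j l : ℕ → ℕ) : ℕ → List ℤ
  | 0 => []
  | M + 1 => blockJL j l M
      ++ (List.replicate (j M) (eps M ++ reflect (eps M))).flatten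
      ++ (List.replicate (l M) (eps M ++ reflect (eps (M + 1)))).flatten

/-- The tail of `t` starting at some position `k` follows the pattern
`(ε_0 ε̄_0)^{j_0}(ε_0 ε̄_1)^{l_0}(ε_1 ε̄_1)^{j_1}(ε_1 ε̄_2)^{l_1}⋯`. -/
def TailFollows (t : ℕ → ℤ) (j l : ℕ → ℕ) : Prop :=
  ∃ k, ∀ M, ∀ i < (blockJL j l M).length, t (i + k) = (blockJL j l M).getD i 0

/-- As `TailFollows`, but for the reflection of the pattern. -/
def TailFollowsRefl (t : ℕ → ℤ) (j l : ℕ → ℕ) : Prop :=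
  ∃ k, ∀ M, ∀ i < (blockJL j l M).length, t (i + k) = -(blockJL j l M).getD i 0

/-- `a_n = 0 λ₁ ⋯ λ_{2^n−1}`. -/
def aword (n : ℕ) : List ℤ := 0 :: ((List.range (2 ^ n - 1)).map fun i => lam (i + 1))

/-- `b_n = (−1) λ₁ ⋯ λ_{2^n−1}`. -/
def bword (n : ℕ) : List ℤ := (-1) :: ((List.range (2 ^ n - 1)).map fun i => lam (i + 1))

/-- The transitions allowed by the matrix `A` on the alphabet `{a_n, b_n, ā_n, b̄_n}`:
`a→b, a→ā, b→ā, ā→a, ā→b̄, b̄→a`. -/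
def allowedTrans (n : ℕ) (u v : List ℤ) : Prop :=
  (u = aword n ∧ (v = bword n ∨ v = reflect (aword n))) ∨
  (u = bword n ∧ v = reflect (aword n)) ∨
  (u = reflect (aword n) ∧ (v = aword n ∨ v = reflect (bword n))) ∨
  (u = reflect (bword n) ∧ v = aword n)


lemma tm_le_one : ∀ n, tm n ≤ 1 := by
  intro n
  induction n using Nat.strong_induction_on with
  | _ n ih =>
    match n with
    | 0 => simp [tm]
    | m + 1 =>
      rw [tm]
      split
      · exact ih _ (by omega)
      · omega

lemma tm_zero : tm 0 = 0 := by rw [tm]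

lemma tm_one : tm 1 = 1 := by
  rw [show (1 : ℕ) = 0 + 1 from rfl, tm, if_neg (by omega)]
  simp [tm_zero]

lemma tm_two_mul (j : ℕ) : tm (2 * j) = tm j := by
  cases j with
  | zero => rfl
  | succ m =>
    have h : 2 * (m + 1) = (2 * m + 1) + 1 := by ring
    rw [h, tm, if_pos (by omega), (by omega : (2 * m + 1 + 1) / 2 = m + 1)]

lemma tm_two_mul_add_one (j : ℕ) : tm (2 * j + 1) = 1 - tm j := by
  rw [tm, if_neg (by omega), (by omega : (2 * j + 1) / 2 = j)]

lemma tm_pow2 (a : ℕ) : tm (2 ^ a) = 1 := by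
  induction a with
  | zero => simpa using tm_one
  | succ a ih => rw [pow_succ, mul_comm, tm_two_mul, ih]

lemma tm_reflect : ∀ a : ℕ, ∀ r < 2 ^ a, tm (2 ^ a + r) = 1 - tm r := by
  intro a
  induction a with
  | zero =>
    intro r hr
    interval_cases r
    simpa [tm_zero] using tm_one
  | succ a ih =>
    intro r hr
    have hpow : (2 : ℕ) ^ (a + 1) = 2 ^ a * 2 := pow_succ 2 a
    rcases Nat.even_or_odd r with ⟨s, hs⟩ | ⟨s, hs⟩
    · have hs' : r = 2 * s := by omega
      have hsa : s < 2 ^ a := by omega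
      have h1 : 2 ^ (a + 1) + r = 2 * (2 ^ a + s) := by omega
      rw [h1, tm_two_mul, ih s hsa, hs', tm_two_mul]
    · have hs' : r = 2 * s + 1 := by omega
      have hsa : s < 2 ^ a := by omega
      have h1 : 2 ^ (a + 1) + r = 2 * (2 ^ a + s) + 1 := by omega
      rw [h1, tm_two_mul_add_one, ih s hsa, hs', tm_two_mul_add_one]

lemma lam_odd (j : ℕ) : lam (2 * j + 1) = 1 - 2 * (tm j : ℤ) := by
  unfold lam
  rw [(by omega : 2 * j + 1 - 1 = 2 * j), tm_two_mul, tm_two_mul_add_one]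
  have := tm_le_one j
  omega

lemma Aword_length (k : ℕ) : (Aword k).length = 2 ^ k := by simp [Aword]

lemma Aword_getD (k p : ℕ) (hp : p < 2 ^ k) :
    (Aword k).getD p 0 = 1 - 2 * (tm p : ℤ) := by
  have hl : p < (Aword k).length := by simpa [Aword_length] using hp
  rw [List.getD_eq_getElem _ _ hl]
  simp [Aword, lam_odd]

lemma perW (k j : ℕ) :
    per (Aword k ++ reflect (Aword k)) j = 1 - 2 * (tm (j % 2 ^ (k + 1)) : ℤ) := by
  have hrlen : (reflect (Aword k)).length = 2 ^ k := by simp [reflect, Aword_length]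
  have hlen : (Aword k ++ reflect (Aword k)).length = 2 ^ (k + 1) := by
    have := pow_succ 2 k
    simp [Aword_length, hrlen]
    omega
  unfold per
  rw [hlen]
  set p := j % 2 ^ (k + 1) with hp
  have hpN : p < 2 ^ (k + 1) := Nat.mod_lt _ (by positivity)
  have hpow : (2 : ℕ) ^ (k + 1) = 2 ^ k * 2 := pow_succ 2 k
  by_cases h : p < 2 ^ k
  · rw [List.getD_append _ _ _ _ (by simpa [Aword_length] using h)]
    exact Aword_getD k p h
  · push_neg at h
    rw [List.getD_append_right _ _ _ _ (by simpa [Aword_length] using h)]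
    rw [Aword_length]
    have hlt : p - 2 ^ k < 2 ^ k := by omega
    have hlt' : p - 2 ^ k < (reflect (Aword k)).length := by omega
    rw [List.getD_eq_getElem _ _ hlt']
    have hltA : p - 2 ^ k < (Aword k).length := by rw [Aword_length]; exact hlt
    have hrefl : (reflect (Aword k))[p - 2 ^ k] = -((Aword k)[p - 2 ^ k]'hltA) := by
      simp [reflect]
    rw [hrefl, ← List.getD_eq_getElem _ 0 hltA, Aword_getD k _ hlt]
    have htm : tm p = 1 - tm (p - 2 ^ k) := by
      have := tm_reflect k (p - 2 ^ k) hlt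
      rw [(by omega : 2 ^ k + (p - 2 ^ k) = p)] at this
      exact this
    have h1 := tm_le_one (p - 2 ^ k)
    have h2 := tm_le_one p
    rw [htm]
    push_cast [Nat.cast_sub h1]
    omega

theorem stmt9 (k i : ℕ) (hk : 1 ≤ k) (hi0 : 0 < i) (hi1 : i < 2 ^ (k + 1))
    (hi2 : i ≠ 2 ^ k) :
    ∃ j, Dseq k i j = (-1, -1) ∨ Dseq k i j = (1, 1) := by
  by_contra hcon
  push_neg at hcon
  set N := 2 ^ (k + 1) with hN
  have hNpos : 0 < N := by positivity
  -- if tm((j+i)%N) = tm(j%N) for some j, we win; so assume they always differ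
  have key : ∀ j, tm ((j + i) % N) ≠ tm (j % N) := by
    intro j heq
    rcases hcon j with ⟨h1, h2⟩
    have hD : Dseq k i j =
        (1 - 2 * (tm ((j + i) % N) : ℤ), 1 - 2 * (tm (j % N) : ℤ)) := by
      unfold Dseq
      rw [perW, perW]
    rw [hD] at h1 h2
    simp only [ne_eq, Prod.mk.injEq, not_and] at h1 h2
    have ha := tm_le_one ((j + i) % N)
    have hb := tm_le_one (j % N)
    omega
  -- hence tm((j+2i)%N) = tm(j%N) for all j
  have h2i : ∀ j, tm ((j + 2 * i) % N) = tm (j % N) := by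
    intro j
    have k1 := key j
    have k2 := key (j + i)
    rw [(by ring : j + i + i = j + 2 * i)] at k2
    have ha := tm_le_one ((j + i) % N)
    have hb := tm_le_one (j % N)
    have hc := tm_le_one ((j + 2 * i) % N)
    omega
  -- N itself is a period
  have hNS : ∀ j, tm ((j + N) % N) = tm (j % N) := by
    intro j
    rw [Nat.add_mod_right]
  -- multiples of a period are periods
  have hmul : ∀ d, (∀ j, tm ((j + d) % N) = tm (j % N)) →
      ∀ m j, tm ((j + m * d) % N) = tm (j % N) := by
    intro d hd m
    induction m with
    | zero => simp
    | succ m ih =>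
      intro j
      have h : j + (m + 1) * d = (j + d) + m * d := by ring
      rw [h, ih (j + d), hd j]
  -- gcd of periods is a period
  have hgcd : ∀ a b, (∀ j, tm ((j + a) % N) = tm (j % N)) →
      (∀ j, tm ((j + b) % N) = tm (j % N)) →
      ∀ j, tm ((j + Nat.gcd a b) % N) = tm (j % N) := by
    intro a b
    induction a, b using Nat.gcd.induction with
    | H0 b => intro _ hb j; simpa using hb j
    | H1 a b hpos ih =>
      intro ha hb
      rw [Nat.gcd_rec]
      apply ih _ ha
      intro j
      have h1 := hmul a ha (b / a) (j + b % a)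
      rw [(by rw [add_assoc, Nat.mod_add_div'] : j + b % a + b / a * a = j + b)] at h1
      rw [← h1, hb j]
  set g := Nat.gcd (2 * i) N with hg
  have hgper : ∀ j, tm ((j + g) % N) = tm (j % N) := hgcd (2 * i) N h2i hNS
  have hgdvdN : g ∣ N := Nat.gcd_dvd_right _ _
  have hgdvd2i : g ∣ 2 * i := Nat.gcd_dvd_left _ _
  have hgneN : g ≠ N := by
    intro h
    have hdvd : N ∣ 2 * i := h ▸ hgdvd2i
    have hpk : N = 2 ^ k * 2 := by rw [hN, pow_succ]
    have h2iN : 2 * i = N := by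
      rcases hdvd with ⟨c, hc⟩
      match c, hc with
      | 0, hc => omega
      | 1, hc => omega
      | (c + 2), hc =>
        have hexp : N * (c + 2) = N * c + 2 * N := by ring
        omega
    exact hi2 (by omega)
  have hgltN : g < N := lt_of_le_of_ne (Nat.le_of_dvd hNpos hgdvdN) hgneN
  obtain ⟨a, _, hag⟩ := (Nat.dvd_prime_pow Nat.prime_two).mp hgdvdN
  have h0 := hgper 0
  rw [Nat.zero_add, Nat.mod_eq_of_lt hgltN, Nat.zero_mod] at h0
  rw [hag, tm_pow2] at h0
  simp [tm] at h0

end
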